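/- arXiv:1205.2050 — 3 statements merged into one kernel-verified Lean document; each statement's English description precedes it below -/
import Mathlib

section
/- Let Q be an acyclic cluster quiver with n vertices. Then every admissible numbering of the vertices of Q by sources is a maximal green sequence for Q. In particular green(Q) ≠ ∅ and ℓ_min(Q) = n. -/
/-!
Common framework: a cluster quiver `Q` with vertex set `{1,…,n}` is encoded by its
skew-symmetric adjacency matrix `B : Fin n → Fin n → ℤ`.  Extended (framed-type)
matrices are `Fin n → (Fin n ⊕ Fin n) → ℤ`, the `Sum.inr` columns being the frozen ones.
-/

namespace GreenSeq

variable {n : ℕ}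

/-- The framed quiver `Q̂ = [B | Iₙ]`. -/
def framedM (B : Fin n → Fin n → ℤ) : Fin n → (Fin n ⊕ Fin n) → ℤ :=
  fun i => Sum.elim (B i) (fun j => if i = j then 1 else 0)

/-- The coframed quiver `Q̌ = [B | −Iₙ]`. -/
def coframedM (B : Fin n → Fin n → ℤ) : Fin n → (Fin n ⊕ Fin n) → ℤ :=
  fun i => Sum.elim (B i) (fun j => if i = j then -1 else 0)

/-- Mutation of an `n × 2n` matrix at a non-frozen index `k`. -/
def mutE (R : Fin n → (Fin n ⊕ Fin n) → ℤ) (k : Fin n) : Fin n → (Fin n ⊕ Fin n) → ℤ :=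
  fun i j =>
    if i = k ∨ j = Sum.inl k then -R i j
    else R i j + max (R i (Sum.inl k)) 0 * max (R k j) 0
               - min (R i (Sum.inl k)) 0 * min (R k j) 0

/-- Iterated mutation along a list of indices (first element mutated first). -/
def mutListE (R : Fin n → (Fin n ⊕ Fin n) → ℤ) (l : List (Fin n)) :
    Fin n → (Fin n ⊕ Fin n) → ℤ :=
  l.foldl mutE R

/-- `Mut(Q̂)`: all matrices obtained from the framed quiver by finite sequences of
mutations. -/
def MutSet (B : Fin n → Fin n → ℤ) : Set (Fin n → (Fin n ⊕ Fin n) → ℤ) :=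
  {R | ∃ l : List (Fin n), R = mutListE (framedM B) l}

/-- A vertex `i` is green in `R` if the `i`-th row of the c-matrix is nonnegative. -/
def IsGreen (R : Fin n → (Fin n ⊕ Fin n) → ℤ) (i : Fin n) : Prop :=
  ∀ j : Fin n, 0 ≤ R i (Sum.inr j)

/-- A vertex `i` is red in `R` if the `i`-th row of the c-matrix is nonpositive. -/
def IsRed (R : Fin n → (Fin n ⊕ Fin n) → ℤ) (i : Fin n) : Prop :=
  ∀ j : Fin n, R i (Sum.inr j) ≤ 0

/-- A green sequence starting from the extended matrix `R`. -/
def IsGreenSeq : (Fin n → (Fin n ⊕ Fin n) → ℤ) → List (Fin n) → Prop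
  | _, [] => True
  | R, k :: l => IsGreen R k ∧ IsGreenSeq (mutE R k) l

/-- A maximal green sequence for the quiver with adjacency matrix `B`. -/
def IsMaxGreenSeq (B : Fin n → Fin n → ℤ) (l : List (Fin n)) : Prop :=
  IsGreenSeq (framedM B) l ∧ ∀ i : Fin n, IsRed (mutListE (framedM B) l) i

/-- Isomorphism of ice quivers: a permutation of the non-frozen vertices carrying `R`
to `R'` and fixing the frozen columns. -/
def IceIso (R R' : Fin n → (Fin n ⊕ Fin n) → ℤ) : Prop :=
  ∃ σ : Equiv.Perm (Fin n),
    (∀ i j : Fin n, R' (σ i) (Sum.inl (σ j)) = R i (Sum.inl j)) ∧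
    (∀ i j : Fin n, R' (σ i) (Sum.inr j) = R i (Sum.inr j))

/-- Mutation of a square exchange matrix at index `k`. -/
def mutSq (B : Fin n → Fin n → ℤ) (k : Fin n) : Fin n → Fin n → ℤ :=
  fun i j =>
    if i = k ∨ j = k then -B i j
    else B i j + max (B i k) 0 * max (B k j) 0 - min (B i k) 0 * min (B k j) 0

/-- Skew-symmetry of the adjacency matrix (the encoding of a cluster quiver). -/
def IsSkew (B : Fin n → Fin n → ℤ) : Prop := ∀ i j : Fin n, B j i = -B i j

/-- A source of the quiver with adjacency matrix `B`. -/
def IsSource (B : Fin n → Fin n → ℤ) (i : Fin n) : Prop := ∀ j : Fin n, 0 ≤ B i j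

/-- `IsSourceSeq B s`: each element of `s` is a source at the time it is mutated. -/
def IsSourceSeq : (Fin n → Fin n → ℤ) → List (Fin n) → Prop
  | _, [] => True
  | B, k :: l => IsSource B k ∧ IsSourceSeq (mutSq B k) l

/-- Acyclicity: some renumbering of the vertices makes `B` nonnegative above the
diagonal. -/
def IsAcyclic (B : Fin n → Fin n → ℤ) : Prop :=
  ∃ σ : Equiv.Perm (Fin n), ∀ i j : Fin n, σ i < σ j → 0 ≤ B i j

/-- Connectivity of the underlying unoriented graph. -/
def IsConnectedQuiver (B : Fin n → Fin n → ℤ) : Prop :=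
  (SimpleGraph.fromRel (fun i j => B i j ≠ 0)).Connected

/-- The Tits form `q(d) = Σ dᵢ² − Σ_{arrows i→j} dᵢ dⱼ` of an acyclic quiver, where the
number of arrows `i → j` is `max (B i j) 0`. -/
def TitsForm (B : Fin n → Fin n → ℤ) (d : Fin n → ℤ) : ℤ :=
  (∑ i, d i ^ 2) - ∑ i, ∑ j, max (B i j) 0 * (d i * d j)

/-- A Dynkin quiver: connected, acyclic, with positive definite Tits form. -/
def IsDynkin (B : Fin n → Fin n → ℤ) : Prop :=
  IsConnectedQuiver B ∧ IsAcyclic B ∧ ∀ d : Fin n → ℤ, d ≠ 0 → 0 < TitsForm B d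

/-- Finite cluster type: some sequence of mutations transforms `B` into the adjacency
matrix of a Dynkin quiver. -/
def FiniteClusterType (B : Fin n → Fin n → ℤ) : Prop :=
  ∃ l : List (Fin n), IsDynkin (l.foldl mutSq B)

/-!
Mutating `[B | diag s]` at a source `k` with `s k ≥ 0` involves no arrow into `k`, so it only
reverses the arrows at `k` and negates `s k`. Along an admissible numbering the c-matrix
therefore stays diagonal, each vertex is green when it is mutated and red afterwards. An
acyclic ordering of the vertices is such a numbering: after mutating an initial segment `S`,
the arrows between `S` and its complement are reversed and the next vertex is a source.
Conversely, along a green sequence the c-row of a vertex that is never mutated only grows from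
its initial value `eᵢ`, so a maximal green sequence mutates every vertex at least once.
-/

def extDiag (B : Fin n → Fin n → ℤ) (s : Fin n → ℤ) : Fin n → (Fin n ⊕ Fin n) → ℤ :=
  fun i => Sum.elim (B i) (fun j => if i = j then s i else 0)

def signFlip (S : Finset (Fin n)) (B : Fin n → Fin n → ℤ) : Fin n → Fin n → ℤ :=
  fun i j => if (i ∈ S ↔ j ∈ S) then B i j else -B i j

@[simp]
lemma signFlip_empty (B : Fin n → Fin n → ℤ) : signFlip ∅ B = B := by
  funext i j
  simp [signFlip]

section Skew

variable {B : Fin n → Fin n → ℤ}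

lemma IsSkew.diag_eq_zero (hB : IsSkew B) (i : Fin n) : B i i = 0 := by
  have := hB i i
  omega

lemma IsSkew.nonpos_of_isSource (hB : IsSkew B) {k : Fin n} (hk : IsSource B k) (i : Fin n) :
    B i k ≤ 0 := by
  have := hB k i
  have := hk i
  omega

lemma isSkew_mutSq (hB : IsSkew B) (k : Fin n) : IsSkew (mutSq B k) := by
  intro i j
  unfold mutSq
  by_cases h : i = k ∨ j = k
  · rw [if_pos h.symm, if_pos h, hB]
  · rw [if_neg (fun h' => h h'.symm), if_neg h, hB i j, hB k j, hB i k]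
    have hmax : ∀ x : ℤ, max (-x) 0 = -min x 0 := fun x => by omega
    have hmin : ∀ x : ℤ, min (-x) 0 = -max x 0 := fun x => by omega
    rw [hmax, hmax, hmin, hmin]
    ring

lemma isSkew_signFlip (hB : IsSkew B) (S : Finset (Fin n)) : IsSkew (signFlip S B) := by
  intro i j
  unfold signFlip
  rw [hB i j]
  by_cases h : i ∈ S ↔ j ∈ S
  · rw [if_pos h, if_pos h.symm]
  · rw [if_neg h, if_neg (fun h' => h h'.symm)]

lemma mutSq_of_isSource (hB : IsSkew B) {k : Fin n} (hk : IsSource B k) :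
    mutSq B k = fun i j => if i = k ∨ j = k then -B i j else B i j := by
  funext i j
  simp only [mutSq, max_eq_right (hB.nonpos_of_isSource hk i), min_eq_right (hk j)]
  split_ifs <;> ring

lemma mutSq_signFlip (hB : IsSkew B) {S : Finset (Fin n)} {k : Fin n} (hkS : k ∉ S)
    (hk : IsSource (signFlip S B) k) :
    mutSq (signFlip S B) k = signFlip (insert k S) B := by
  rw [mutSq_of_isSource (isSkew_signFlip hB S) hk]
  funext i j
  by_cases hi : i = k <;> by_cases hj : j = k <;> by_cases hiS : i ∈ S <;> by_cases hjS : j ∈ S <;>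
    simp_all [signFlip, hB.diag_eq_zero]

end Skew

section Framed

variable {B : Fin n → Fin n → ℤ} {s : Fin n → ℤ} {k : Fin n}

lemma framedM_eq_extDiag (B : Fin n → Fin n → ℤ) : framedM B = extDiag B 1 := rfl

lemma isGreen_extDiag (hs : 0 ≤ s k) : IsGreen (extDiag B s) k := by
  intro j
  simp only [extDiag, Sum.elim_inr]
  split_ifs <;> omega

lemma isRed_extDiag (hs : s k ≤ 0) : IsRed (extDiag B s) k := by
  intro j
  simp only [extDiag, Sum.elim_inr]
  split_ifs <;> omega

lemma mutE_extDiag_of_isSource (hB : IsSkew B) (hk : IsSource B k) (hs : 0 ≤ s k) :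
    mutE (extDiag B s) k = extDiag (mutSq B k) (Function.update s k (-s k)) := by
  funext i j
  cases j with
  | inl j => simp only [mutE, mutSq, extDiag, Sum.elim_inl, Sum.inl.injEq]
  | inr j =>
    have hik : max (B i k) 0 = 0 := max_eq_right (hB.nonpos_of_isSource hk i)
    have hkj : min (extDiag B s k (Sum.inr j)) 0 = 0 := min_eq_right (isGreen_extDiag hs j)
    rcases eq_or_ne i k with rfl | hne
    · by_cases hij : i = j <;> simp [mutE, extDiag, hij]
    · simp only [mutE, extDiag, Sum.elim_inl, Sum.elim_inr, reduceCtorEq, hne, or_false,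
        if_false, Function.update_of_ne hne] at hkj ⊢
      rw [hik, hkj]
      ring

lemma IsSourceSeq.isGreenSeq_extDiag {l : List (Fin n)} (hB : IsSkew B) (hl : IsSourceSeq B l)
    (hnd : l.Nodup) (hs : ∀ k ∈ l, 0 ≤ s k) :
    IsGreenSeq (extDiag B s) l ∧
      mutListE (extDiag B s) l =
        extDiag (l.foldl mutSq B) (fun i => if i ∈ l then -s i else s i) := by
  induction l generalizing B s with
  | nil => exact ⟨trivial, by simp [mutListE]⟩
  | cons k l ih =>
    obtain ⟨hk, hl⟩ := hl
    obtain ⟨hkl, hnd⟩ := List.nodup_cons.mp hnd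
    have hsk : 0 ≤ s k := hs k List.mem_cons_self
    have hstep := mutE_extDiag_of_isSource hB hk hsk
    have hs' : ∀ i ∈ l, 0 ≤ Function.update s k (-s k) i := fun i hi => by
      rw [Function.update_of_ne (ne_of_mem_of_not_mem hi hkl)]
      exact hs i (List.mem_cons_of_mem _ hi)
    obtain ⟨hgreen, hfinal⟩ := ih (isSkew_mutSq hB k) hl hnd hs'
    refine ⟨⟨isGreen_extDiag hsk, hstep ▸ hgreen⟩, ?_⟩
    change mutListE (mutE (extDiag B s) k) l = _
    rw [hstep, hfinal, List.foldl_cons]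
    congr 1
    funext i
    rcases eq_or_ne i k with rfl | hik
    · simp [hkl]
    · simp [hik]

lemma IsSourceSeq.isMaxGreenSeq {l : List (Fin n)} (hB : IsSkew B)
    (hp : l.Perm (List.finRange n)) (hl : IsSourceSeq B l) : IsMaxGreenSeq B l := by
  obtain ⟨hgreen, hfinal⟩ := hl.isGreenSeq_extDiag (s := 1) hB
    (hp.nodup_iff.mpr (List.nodup_finRange n)) (fun _ _ => zero_le_one)
  rw [IsMaxGreenSeq, framedM_eq_extDiag, hfinal]
  exact ⟨hgreen, fun i => isRed_extDiag (by simp [hp.mem_iff])⟩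

end Framed

section Length

variable {R : Fin n → (Fin n ⊕ Fin n) → ℤ} {i k : Fin n}

lemma IsGreen.le_mutE (hk : IsGreen R k) (hik : i ≠ k) (j : Fin n) :
    R i (Sum.inr j) ≤ mutE R k i (Sum.inr j) := by
  have hmin : min (R k (Sum.inr j)) 0 = 0 := min_eq_right (hk j)
  have hprod : 0 ≤ max (R i (Sum.inl k)) 0 * max (R k (Sum.inr j)) 0 :=
    mul_nonneg (le_max_right _ _) (le_max_right _ _)
  simp only [mutE, hik, reduceCtorEq, or_self, if_false, hmin]
  omega

lemma IsGreenSeq.le_mutListE_of_notMem {l : List (Fin n)} (hl : IsGreenSeq R l) (hi : i ∉ l)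
    (j : Fin n) : R i (Sum.inr j) ≤ mutListE R l i (Sum.inr j) := by
  induction l generalizing R with
  | nil => exact le_rfl
  | cons k l ih =>
    obtain ⟨hk, hl⟩ := hl
    rw [List.mem_cons, not_or] at hi
    exact (hk.le_mutE hi.1 j).trans (ih hl hi.2)

lemma IsMaxGreenSeq.mem {B : Fin n → Fin n → ℤ} {l : List (Fin n)} (hl : IsMaxGreenSeq B l)
    (i : Fin n) : i ∈ l := by
  by_contra hi
  have hle := hl.1.le_mutListE_of_notMem hi i
  have hred := hl.2 i i
  simp only [framedM, Sum.elim_inr, if_true] at hle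
  omega

lemma IsMaxGreenSeq.le_length {B : Fin n → Fin n → ℤ} {l : List (Fin n)}
    (hl : IsMaxGreenSeq B l) : n ≤ l.length := by
  simpa using ((List.nodup_finRange n).subperm fun i _ => hl.mem i).length_le

end Length

section Acyclic

variable {B : Fin n → Fin n → ℤ} (hB : IsSkew B) {σ : Equiv.Perm (Fin n)}
  (hσ : ∀ i j, σ i < σ j → 0 ≤ B i j)
include hB hσ

lemma isSource_signFlip {S : Finset (Fin n)} {k : Fin n} (hkS : k ∉ S)
    (hbelow : ∀ i ∈ S, σ i < σ k) (habove : ∀ j ∉ S, σ k ≤ σ j) :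
    IsSource (signFlip S B) k := by
  intro j
  by_cases hjS : j ∈ S
  · have := hB k j
    have := hσ j k (hbelow j hjS)
    simp only [signFlip, hkS, hjS, false_iff, not_true, if_false]
    omega
  · simp only [signFlip, hkS, hjS, iff_self, if_true]
    rcases eq_or_ne j k with rfl | hjk
    · exact (hB.diag_eq_zero j).ge
    · exact hσ k j ((habove j hjS).lt_of_ne (σ.injective.ne hjk.symm))

lemma isSourceSeq_signFlip (t : List (Fin n)) (S : Finset (Fin n))
    (ht : t.Pairwise (σ · < σ ·)) (hcover : ∀ j, j ∈ S ∨ j ∈ t)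
    (hbelow : ∀ i ∈ S, ∀ j ∈ t, σ i < σ j) :
    IsSourceSeq (signFlip S B) t := by
  induction t generalizing S with
  | nil => trivial
  | cons k t ih =>
    obtain ⟨hk, ht⟩ := List.pairwise_cons.mp ht
    have hkS : k ∉ S := fun h => lt_irrefl _ (hbelow k h k List.mem_cons_self)
    have hsrc : IsSource (signFlip S B) k := by
      refine isSource_signFlip hB hσ hkS (fun i hi => hbelow i hi k List.mem_cons_self) ?_
      intro j hjS
      rcases List.mem_cons.mp ((hcover j).resolve_left hjS) with rfl | hj
      · exact le_rfl
      · exact (hk j hj).le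
    refine ⟨hsrc, ?_⟩
    rw [mutSq_signFlip hB hkS hsrc]
    refine ih (insert k S) ht ?_ ?_
    · intro j
      rcases hcover j with hj | hj
      · exact Or.inl (Finset.mem_insert_of_mem hj)
      · rcases List.mem_cons.mp hj with rfl | hj
        · exact Or.inl (Finset.mem_insert_self _ _)
        · exact Or.inr hj
    · intro i hi j hj
      rcases Finset.mem_insert.mp hi with rfl | hi
      · exact hk j hj
      · exact hbelow i hi j (List.mem_cons_of_mem _ hj)

end Acyclic

lemma IsAcyclic.exists_perm_finRange_isSourceSeq {B : Fin n → Fin n → ℤ} (hB : IsSkew B)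
    (hacyc : IsAcyclic B) : ∃ s : List (Fin n), s.Perm (List.finRange n) ∧ IsSourceSeq B s := by
  obtain ⟨σ, hσ⟩ := hacyc
  have hperm := Equiv.Perm.map_finRange_perm σ.symm
  refine ⟨_, hperm, ?_⟩
  have hsorted : ((List.finRange n).map σ.symm).Pairwise (σ · < σ ·) :=
    List.pairwise_map.mpr ((List.pairwise_lt_finRange n).imp (by simp))
  have hall (j : Fin n) : j ∈ (List.finRange n).map σ.symm :=
    hperm.mem_iff.mpr (List.mem_finRange j)
  simpa using isSourceSeq_signFlip hB hσ _ ∅ hsorted (fun j => Or.inr (hall j)) (by simp)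

/-- for an acyclic cluster quiver, every admissible numbering of the
vertices by sources is a maximal green sequence; in particular `green(Q) ≠ ∅` and
`ℓ_min(Q) = n`. -/
theorem acyclic_admissible_source_numbering_is_mgs (n : ℕ) (B : Fin n → Fin n → ℤ)
    (hskew : IsSkew B) (hacyc : IsAcyclic B) :
    (∀ s : List (Fin n), s.Perm (List.finRange n) → IsSourceSeq B s →
        IsMaxGreenSeq B s) ∧
    (∃ s : List (Fin n), IsMaxGreenSeq B s) ∧
    IsLeast {l : ℕ | ∃ s : List (Fin n), IsMaxGreenSeq B s ∧ s.length = l} n := by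
  obtain ⟨s₀, hp₀, hs₀⟩ := hacyc.exists_perm_finRange_isSourceSeq hskew
  have hmgs₀ : IsMaxGreenSeq B s₀ := hs₀.isMaxGreenSeq hskew hp₀
  refine ⟨fun s hp hs => hs.isMaxGreenSeq hskew hp, ⟨s₀, hmgs₀⟩,
    ⟨s₀, hmgs₀, by simpa using hp₀.length_eq⟩, ?_⟩
  rintro _ ⟨s, hs, rfl⟩
  exact hs.le_length

end GreenSeq
end

section
/- Let Q be the Markov quiver: the quiver with three vertices 1, 2, 3 and exactly two arrows from 1 to 2, two arrows from 2 to 3, and two arrows from 3 to 1 (so B(Q)_{12} = B(Q)_{23} = B(Q)_{31} = 2). Then Q has no maximal green sequences: green(Q) = ∅. -/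
/-!
Common framework: a cluster quiver `Q` with vertex set `{1,…,n}` is encoded by its
skew-symmetric adjacency matrix `B : Fin n → Fin n → ℤ`.  Extended (framed-type)
matrices are `Fin n → (Fin n ⊕ Fin n) → ℤ`, the `Sum.inr` columns being the frozen ones.
-/

namespace GreenSeq

variable {n : ℕ}

/-- The Markov quiver: two arrows `1 → 2`, two arrows `2 → 3`, two arrows `3 → 1`. -/
def markov : Fin 3 → Fin 3 → ℤ :=
  ![![0, 2, -2], ![-2, 0, 2], ![2, -2, 0]]


/-- The invariant: B-part is `±markov` and each column of the c-matrix sums to 1. -/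
def Inv (R : Fin 3 → (Fin 3 ⊕ Fin 3) → ℤ) : Prop :=
  ((∀ i j, R i (Sum.inl j) = markov i j) ∨ (∀ i j, R i (Sum.inl j) = - markov i j)) ∧
  (∀ j : Fin 3, R 0 (Sum.inr j) + R 1 (Sum.inr j) + R 2 (Sum.inr j) = 1)

lemma inv_step (R : Fin 3 → (Fin 3 ⊕ Fin 3) → ℤ) (k : Fin 3)
    (hg : IsGreen R k) (h : Inv R) : Inv (mutE R k) := by
  obtain ⟨hB, hC⟩ := h
  have hk : k = 0 ∨ k = 1 ∨ k = 2 := by omega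
  constructor
  · rcases hB with hB | hB
    · right
      intro i j
      have hi : i = 0 ∨ i = 1 ∨ i = 2 := by omega
      have hj : j = 0 ∨ j = 1 ∨ j = 2 := by omega
      rcases hk with rfl | rfl | rfl <;> rcases hi with rfl | rfl | rfl <;>
        rcases hj with rfl | rfl | rfl <;>
        simp [mutE, hB, markov]
    · left
      intro i j
      have hi : i = 0 ∨ i = 1 ∨ i = 2 := by omega
      have hj : j = 0 ∨ j = 1 ∨ j = 2 := by omega
      rcases hk with rfl | rfl | rfl <;> rcases hi with rfl | rfl | rfl <;>
        rcases hj with rfl | rfl | rfl <;>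
        simp [mutE, hB, markov]
  · intro j
    have hCj := hC j
    have hgj : (0:ℤ) ≤ R k (Sum.inr j) := hg j
    have hmax : max (R k (Sum.inr j)) 0 = R k (Sum.inr j) := max_eq_left hgj
    have hmin : min (R k (Sum.inr j)) 0 = 0 := min_eq_right hgj
    rcases hB with hB | hB <;>
      rcases hk with rfl | rfl | rfl <;>
      simp only [mutE, hB, hmax, hmin] <;>
      simp [markov] <;>
      omega

lemma inv_greenseq : ∀ (l : List (Fin 3)) (R : Fin 3 → (Fin 3 ⊕ Fin 3) → ℤ),
    Inv R → IsGreenSeq R l → Inv (mutListE R l) := by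
  intro l
  induction l with
  | nil => intro R h _; simpa [mutListE] using h
  | cons k l ih =>
    intro R h hgs
    obtain ⟨hk, hl⟩ := hgs
    have : mutListE R (k :: l) = mutListE (mutE R k) l := rfl
    rw [this]
    exact ih _ (inv_step R k hk h) hl

/-- the Markov quiver has no maximal green sequences. -/
theorem markov_no_maximal_green_sequence :
    {s : List (Fin 3) | IsMaxGreenSeq markov s} = ∅ := by
  ext s
  simp only [Set.mem_setOf_eq, Set.mem_empty_iff_false, iff_false]
  rintro ⟨hg, hred⟩
  have h0 : Inv (framedM markov) := by
    constructor
    · left; intro i j; rfl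
    · intro j; fin_cases j <;> decide
  have hInv := inv_greenseq s (framedM markov) h0 hg
  have hsum := hInv.2 0
  have h1 := hred 0 0
  have h2 := hred 1 0
  have h3 := hred 2 0
  omega

end GreenSeq
end

section
/- Let m ≥ 2 and let Q be the quiver with two vertices and exactly m arrows from 1 to 2 (B(Q)_{12} = m). Then Q has a unique maximal green sequence, namely (1,2); in particular |green(Q)| = 1 and ℓ_min(Q) = ℓ_max(Q) = 2. -/
/-!
Common framework: a cluster quiver `Q` with vertex set `{1,…,n}` is encoded by its
skew-symmetric adjacency matrix `B : Fin n → Fin n → ℤ`.  Extended (framed-type)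
matrices are `Fin n → (Fin n ⊕ Fin n) → ℤ`, the `Sum.inr` columns being the frozen ones.
-/

namespace GreenSeq

variable {n : ℕ}

/-- The rank-two quiver with `m` arrows `1 → 2`. -/
def kroneckerM (m : ℤ) : Fin 2 → Fin 2 → ℤ := ![![0, m], ![-m, 0]]


/-! ### Auxiliary development for Statement 16 -/

/-- Chebyshev-like sequence: `aa 0 = -1`, `aa 1 = 0`, `aa (n+2) = m * aa (n+1) - aa n`. -/
def aa (m : ℤ) : ℕ → ℤ
  | 0 => -1
  | 1 => 0
  | n + 2 => m * aa m (n + 1) - aa m n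

lemma aa_step (m : ℤ) (n : ℕ) : aa m (n + 2) = m * aa m (n + 1) - aa m n := rfl

lemma aa_facts (m : ℤ) (hm : 2 ≤ m) : ∀ n, aa m n ≤ aa m (n + 1) ∧ 0 ≤ aa m (n + 1) := by
  intro n
  induction n with
  | zero => simp [aa]
  | succ n ih =>
    have h := aa_step m n
    constructor
    · nlinarith [ih.1, ih.2]
    · nlinarith [ih.1, ih.2]

lemma one_le_aa (m : ℤ) (hm : 2 ≤ m) : ∀ n, 1 ≤ aa m (n + 2) := by
  intro n
  induction n with
  | zero => simp [aa]
  | succ n ih =>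
    have h : aa m (n + 2) ≤ aa m (n + 1 + 2) := (aa_facts m hm (n + 2)).1
    omega

/-- The green vertex after `k` alternating mutations starting at vertex `1`. -/
def gv (k : ℕ) : Fin 2 := if k % 2 = 0 then 1 else 0

/-- The alternating list `[1,0,1,0,…]` of length `k`. -/
def altL : ℕ → List (Fin 2)
  | 0 => []
  | k + 1 => altL k ++ [gv k]

/-- The extended matrix after `k` alternating mutations starting at vertex `1`. -/
def stB (m : ℤ) (k : ℕ) : Fin 2 → (Fin 2 ⊕ Fin 2) → ℤ :=
  fun i => Sum.elim
    (fun j => if i = j then 0 else if i = gv k then -m else m)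
    (fun j => if i = gv k then aa m (k + 1 + j.val) else -(aa m (k + j.val)))

/-- The state after the green sequence `[0]`. -/
def SA1 (m : ℤ) : Fin 2 → (Fin 2 ⊕ Fin 2) → ℤ :=
  fun i => Sum.elim
    (fun j => if i = j then 0 else if i = 0 then -m else m)
    (fun j => if i = 0 then (if j = 0 then -1 else 0) else (if j = 1 then 1 else 0))

/-- The state after the green sequence `[0, 1]`. -/
def SA2 (m : ℤ) : Fin 2 → (Fin 2 ⊕ Fin 2) → ℤ :=
  fun i => Sum.elim
    (fun j => if i = j then 0 else if i = 0 then m else -m)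
    (fun j => if i = j then -1 else 0)

lemma stB_zero (m : ℤ) : stB m 0 = framedM (kroneckerM m) := by
  funext i j
  fin_cases i <;> rcases j with j | j <;> fin_cases j <;>
    simp [stB, framedM, kroneckerM, gv, aa]

lemma stB_step (m : ℤ) (hm : 2 ≤ m) (k : ℕ) :
    mutE (stB m k) (gv k) = stB m (k + 1) := by
  have h0 : (0 : ℤ) ≤ aa m (k + 1) := (aa_facts m hm k).2
  have h1 : (0 : ℤ) ≤ aa m (k + 1 + 1) := (aa_facts m hm (k + 1)).2
  have e1 : aa m (k + 1 + 1) = m * aa m (k + 1) - aa m k := aa_step m k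
  have e2 : aa m (k + 1 + 1 + 1) = m * aa m (k + 1 + 1) - aa m (k + 1) := aa_step m (k + 1)
  have M1 : max m 0 = m := by omega
  have M2 : min m 0 = 0 := by omega
  have M3 : max (-m) 0 = 0 := by omega
  have M4 : min (-m) 0 = -m := by omega
  have A1 : max (aa m (k + 1)) 0 = aa m (k + 1) := by omega
  have A2 : min (aa m (k + 1)) 0 = 0 := by omega
  have A3 : max (aa m (k + 1 + 1)) 0 = aa m (k + 1 + 1) := by omega
  have A4 : min (aa m (k + 1 + 1)) 0 = 0 := by omega
  rcases Nat.mod_two_eq_zero_or_one k with hk | hk <;>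
  · have hk1 : (k + 1) % 2 = 1 - k % 2 := by omega
    funext i j
    fin_cases i <;> rcases j with j | j <;> fin_cases j <;>
      simp only [mutE, stB, gv, hk, hk1] <;>
      norm_num <;>
      simp only [M1, M2, M3, M4, A1, A2, A3, A4, reduceCtorEq, reduceIte] <;>
      linarith

lemma mutListE_append_singleton (R : Fin n → (Fin n ⊕ Fin n) → ℤ) (l : List (Fin n))
    (k : Fin n) : mutListE R (l ++ [k]) = mutE (mutListE R l) k := by
  simp [mutListE, List.foldl_append]

lemma isGreenSeq_append (R : Fin n → (Fin n ⊕ Fin n) → ℤ) (l : List (Fin n)) (k : Fin n) :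
    IsGreenSeq R (l ++ [k]) ↔ IsGreenSeq R l ∧ IsGreen (mutListE R l) k := by
  induction l generalizing R with
  | nil => simp [IsGreenSeq, mutListE]
  | cons x l ih =>
    constructor
    · rintro ⟨h1, h2⟩
      exact ⟨⟨h1, ((ih _).1 h2).1⟩, ((ih _).1 h2).2⟩
    · rintro ⟨⟨h1, h2⟩, h3⟩
      exact ⟨h1, (ih (mutE R x)).2 ⟨h2, h3⟩⟩

lemma mutListE_altL (m : ℤ) (hm : 2 ≤ m) (k : ℕ) :
    mutListE (framedM (kroneckerM m)) (altL k) = stB m k := by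
  induction k with
  | zero => simp [altL, mutListE, stB_zero]
  | succ k ih =>
    rw [altL, mutListE_append_singleton, ih, stB_step m hm k]

lemma mutE_framed_zero (m : ℤ) (hm : 2 ≤ m) :
    mutE (framedM (kroneckerM m)) 0 = SA1 m := by
  have M1 : max m 0 = m := by omega
  have M2 : min m 0 = 0 := by omega
  have M3 : max (-m) 0 = 0 := by omega
  have M4 : min (-m) 0 = -m := by omega
  funext i j
  fin_cases i <;> rcases j with j | j <;> fin_cases j <;>
    simp [mutE, framedM, kroneckerM, SA1, M1, M2, M3, M4] <;> ring

lemma mutE_SA1 (m : ℤ) (hm : 2 ≤ m) : mutE (SA1 m) 1 = SA2 m := by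
  have M1 : max m 0 = m := by omega
  have M2 : min m 0 = 0 := by omega
  have M3 : max (-m) 0 = 0 := by omega
  have M4 : min (-m) 0 = -m := by omega
  funext i j
  fin_cases i <;> rcases j with j | j <;> fin_cases j <;>
    simp [mutE, SA1, SA2, M1, M2, M3, M4] <;> ring

lemma mutListE_01 (m : ℤ) (hm : 2 ≤ m) :
    mutListE (framedM (kroneckerM m)) [0, 1] = SA2 m := by
  have : ([0, 1] : List (Fin 2)) = [0] ++ [1] := rfl
  rw [this, mutListE_append_singleton]
  have h0 : mutListE (framedM (kroneckerM m)) [0] = SA1 m := by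
    simp [mutListE, mutE_framed_zero m hm]
  rw [h0, mutE_SA1 m hm]

lemma mgs_01 (m : ℤ) (hm : 2 ≤ m) : IsMaxGreenSeq (kroneckerM m) [0, 1] := by
  constructor
  · refine ⟨?_, ?_, trivial⟩
    · intro j; fin_cases j <;> simp [framedM, kroneckerM]
    · rw [mutE_framed_zero m hm]
      intro j; fin_cases j <;> simp [SA1]
  · rw [mutListE_01 m hm]
    intro i j; fin_cases i <;> fin_cases j <;> simp [SA2, IsRed]

lemma classify (m : ℤ) (hm : 2 ≤ m) (l : List (Fin 2))
    (h : IsGreenSeq (framedM (kroneckerM m)) l) :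
    l = [] ∨ l = [0] ∨ l = [0, 1] ∨ ∃ k, 1 ≤ k ∧ l = altL k := by
  induction l using List.reverseRecOn with
  | nil => left; rfl
  | append_singleton l x ih =>
    rw [isGreenSeq_append] at h
    obtain ⟨hl, hg⟩ := h
    rcases ih hl with rfl | rfl | rfl | ⟨k, hk, rfl⟩
    · -- state = framedM, both vertices green
      simp only [mutListE, List.foldl_nil] at hg
      fin_cases x
      · right; left; rfl
      · right; right; right
        exact ⟨1, le_refl 1, by simp [altL, gv]⟩
    · -- state = SA1, only vertex 1 green
      have hs : mutListE (framedM (kroneckerM m)) [0] = SA1 m := by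
        simp [mutListE, mutE_framed_zero m hm]
      rw [hs] at hg
      fin_cases x
      · exfalso
        have := hg 0
        simp [SA1] at this
      · right; right; left; rfl
    · -- state = SA2, no vertex green
      rw [mutListE_01 m hm] at hg
      exfalso
      fin_cases x
      · have := hg 0; simp [SA2] at this
      · have := hg 1; simp [SA2] at this
    · -- state = stB m k with k ≥ 1, only vertex gv k green
      rw [mutListE_altL m hm] at hg
      obtain ⟨k', rfl⟩ : ∃ k', k = k' + 1 := ⟨k - 1, by omega⟩
      have h1 : 1 ≤ aa m (k' + 1 + 1) := one_le_aa m hm k'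
      have h2 : 1 ≤ aa m (k' + 2) := one_le_aa m hm k'
      have hx : x = gv (k' + 1) := by
        by_contra hne
        have hg1 := hg 1
        rcases Nat.mod_two_eq_zero_or_one (k' + 1) with hpar | hpar
        · have hx0 : x = 0 := by fin_cases x <;> simp_all [gv]
          rw [hx0] at hg1
          simp [stB, gv, hpar] at hg1
          omega
        · have hx0 : x = 1 := by fin_cases x <;> simp_all [gv]
          rw [hx0] at hg1
          simp [stB, gv, hpar] at hg1
          omega
      right; right; right
      exact ⟨k' + 2, by omega, by rw [hx]; rfl⟩

theorem unique_mgs (m : ℤ) (hm : 2 ≤ m) :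
    {u : List (Fin 2) | IsMaxGreenSeq (kroneckerM m) u} = {[(0 : Fin 2), (1 : Fin 2)]} := by
  ext u
  simp only [Set.mem_setOf_eq, Set.mem_singleton_iff]
  constructor
  · rintro ⟨hg, hr⟩
    rcases classify m hm u hg with rfl | rfl | rfl | ⟨k, hk, rfl⟩
    · exfalso
      have := hr 0 0
      simp [mutListE, framedM, kroneckerM] at this
    · exfalso
      have hs : mutListE (framedM (kroneckerM m)) [0] = SA1 m := by
        simp [mutListE, mutE_framed_zero m hm]
      have := hr 1 1
      rw [hs] at this
      simp [SA1] at this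
    · rfl
    · exfalso
      have := hr (gv k) 1
      rw [mutListE_altL m hm] at this
      have h1 : 1 ≤ aa m (k + 1 + 1) := one_le_aa m hm k
      simp [stB] at this
      omega
  · rintro rfl
    exact mgs_01 m hm

/-- for `m ≥ 2`, the quiver with `m` arrows `1 → 2` has the sequence
`(1,2)` as its unique maximal green sequence; in particular `|green(Q)| = 1` and
`ℓ_min(Q) = ℓ_max(Q) = 2`. -/
theorem rank_two_infinite_type_unique_mgs (m : ℤ) (hm : 2 ≤ m) :
    {u : List (Fin 2) | IsMaxGreenSeq (kroneckerM m) u} = {[(0 : Fin 2), (1 : Fin 2)]} ∧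
    IsLeast {l : ℕ | ∃ u : List (Fin 2), IsMaxGreenSeq (kroneckerM m) u ∧ u.length = l}
      2 ∧
    IsGreatest
      {l : ℕ | ∃ u : List (Fin 2), IsMaxGreenSeq (kroneckerM m) u ∧ u.length = l} 2 := by
  have hset := unique_mgs m hm
  have hmem : IsMaxGreenSeq (kroneckerM m) [(0 : Fin 2), 1] := mgs_01 m hm
  have hlen : ∀ u : List (Fin 2), IsMaxGreenSeq (kroneckerM m) u → u.length = 2 := by
    intro u hu
    have : u ∈ {u : List (Fin 2) | IsMaxGreenSeq (kroneckerM m) u} := hu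
    rw [hset] at this
    simp only [Set.mem_singleton_iff] at this
    subst this; rfl
  refine ⟨hset, ⟨⟨[0, 1], hmem, rfl⟩, ?_⟩, ⟨⟨[0, 1], hmem, rfl⟩, ?_⟩⟩ <;>
  · rintro l ⟨u, hu, rfl⟩
    rw [hlen u hu]

end GreenSeq
end
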